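/- Under the weighted trace-penalty assumptions, every global minimizer X* of f has full column rank p; equivalently, no global minimizer has a zero column. -/

import Mathlib

/-!
If `X v = 0` for some `v ≠ 0`, then `rank (Xᵀ B) ≤ rank X < p`, where the columns of `B` are the
first `p` eigenvectors of `A`, so `Xᵀ` also kills some `u = B c ≠ 0`. For `Y = X + t u vᵀ` all
cross terms of `f` vanish, and with `s = t² |u|² |v|²` the bounds `uᵀ A u ≤ λ_p |u|²` and
`vᵀ W v ≥ w_p |v|²` give `f Y - f X ≤ (s / 2) (λ_p - μ w_p) + μ s² / 4`, which is negative for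
`s = w_p - λ_p / μ`.
-/

open Matrix

namespace Matrix

variable {m k l : Type*}

theorem rank_lt_card_width_iff [Fintype k] {K : Type*} [Field K] (M : Matrix m k K) :
    M.rank < Fintype.card k ↔ ∃ c, c ≠ 0 ∧ M *ᵥ c = 0 := by
  have h := LinearMap.finrank_range_add_finrank_ker M.mulVecLin
  rw [Module.finrank_fintype_fun_eq_card] at h
  change M.rank + _ = _ at h
  have hker : M.rank < Fintype.card k ↔ 0 < Module.finrank K (LinearMap.ker M.mulVecLin) := by
    omega
  rw [hker, Module.finrank_pos_iff_exists_ne_zero]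
  simp [and_comm]

theorem mulVec_dotProduct_mulVec_mulVec [Fintype m] [Fintype k] {R : Type*} [CommSemiring R]
    (B : Matrix m k R) (A : Matrix m m R) (c : k → R) :
    (B *ᵥ c) ⬝ᵥ (A *ᵥ (B *ᵥ c)) = c ⬝ᵥ ((Bᵀ * A * B) *ᵥ c) := by
  simp only [dotProduct_mulVec, ← mulVec_mulVec, vecMul_mulVec, vecMul_transpose]

theorem transpose_submatrix_mul_mul_submatrix [Fintype m] {R : Type*} [CommSemiring R]
    (V : Matrix m k R) (M : Matrix m m R) (e : l → k) :
    (V.submatrix id e)ᵀ * M * V.submatrix id e = (Vᵀ * M * V).submatrix e e := by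
  rw [transpose_submatrix, submatrix_mul (Vᵀ * M) V e id e Function.bijective_id,
    submatrix_mul Vᵀ M e id id Function.bijective_id, submatrix_id_id]

theorem dotProduct_diagonal_mulVec_le [Fintype k] [DecidableEq k] {d : k → ℝ} {M : ℝ}
    (h : ∀ i, d i ≤ M) (c : k → ℝ) : c ⬝ᵥ (diagonal d *ᵥ c) ≤ M * (c ⬝ᵥ c) := by
  simp only [mulVec_diagonal, dotProduct, Finset.mul_sum]
  exact Finset.sum_le_sum fun i _ => by nlinarith [h i, mul_self_nonneg (c i)]

theorem le_dotProduct_diagonal_mulVec [Fintype k] [DecidableEq k] {d : k → ℝ} {M : ℝ}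
    (h : ∀ i, M ≤ d i) (c : k → ℝ) : M * (c ⬝ᵥ c) ≤ c ⬝ᵥ (diagonal d *ᵥ c) := by
  simp only [mulVec_diagonal, dotProduct, Finset.mul_sum]
  exact Finset.sum_le_sum fun i _ => by nlinarith [h i, mul_self_nonneg (c i)]

theorem trace_transpose_mul_mul_vecMulVec_eq_zero [Fintype m] [Fintype k] (A : Matrix m m ℝ)
    {X : Matrix m k ℝ} {v : k → ℝ} (hXv : X *ᵥ v = 0) (u : m → ℝ) :
    (Xᵀ * A * vecMulVec u v).trace = 0 := by
  rw [mul_vecMulVec, trace_vecMulVec, ← mulVec_mulVec, mulVec_transpose, ← dotProduct_mulVec, hXv,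
    dotProduct_zero]

theorem trace_transpose_mul_mul_add_vecMulVec [Fintype m] [Fintype k] (A : Matrix m m ℝ)
    {X : Matrix m k ℝ} {v : k → ℝ} (hXv : X *ᵥ v = 0) (u : m → ℝ) :
    ((X + vecMulVec u v)ᵀ * A * (X + vecMulVec u v)).trace
      = (Xᵀ * A * X).trace + (u ⬝ᵥ A *ᵥ u) * (v ⬝ᵥ v) := by
  have hcross : ((vecMulVec u v)ᵀ * A * X).trace = 0 := by
    rw [← trace_transpose, transpose_mul, transpose_mul, transpose_transpose, ← Matrix.mul_assoc]
    exact trace_transpose_mul_mul_vecMulVec_eq_zero Aᵀ hXv u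
  have hsq : ((vecMulVec u v)ᵀ * A * vecMulVec u v).trace = (u ⬝ᵥ A *ᵥ u) * (v ⬝ᵥ v) := by
    rw [transpose_vecMulVec, vecMulVec_mul, vecMulVec_mul_vecMulVec, trace_vecMulVec,
      dotProduct_smul, smul_eq_mul, ← dotProduct_mulVec]
  rw [transpose_add, Matrix.add_mul, Matrix.add_mul, Matrix.mul_add, Matrix.mul_add, trace_add,
    trace_add, trace_add, trace_transpose_mul_mul_vecMulVec_eq_zero A hXv, hcross, hsq,
    add_zero, zero_add]

theorem transpose_mul_self_add_vecMulVec [Fintype m] {X : Matrix m k ℝ} {u : m → ℝ}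
    (hXu : Xᵀ *ᵥ u = 0) (v : k → ℝ) :
    (X + vecMulVec u v)ᵀ * (X + vecMulVec u v) = Xᵀ * X + (u ⬝ᵥ u) • vecMulVec v v := by
  have huX : u ᵥ* X = 0 := by rw [← mulVec_transpose, hXu]
  rw [transpose_add, transpose_vecMulVec, Matrix.add_mul, Matrix.mul_add, Matrix.mul_add,
    mul_vecMulVec, hXu, vecMulVec_mul, huX, vecMulVec_mul_vecMulVec, zero_vecMulVec,
    vecMulVec_zero, vecMulVec_smul, add_zero, zero_add]

theorem trace_transpose_mul_self_add_smul_vecMulVec [Fintype k] (M : Matrix k k ℝ) (a : ℝ)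
    (v : k → ℝ) :
    ((M + a • vecMulVec v v)ᵀ * (M + a • vecMulVec v v)).trace
      = (Mᵀ * M).trace + 2 * a * (v ⬝ᵥ M *ᵥ v) + a ^ 2 * (v ⬝ᵥ v) ^ 2 := by
  rw [transpose_add, transpose_smul, transpose_vecMulVec, Matrix.add_mul, Matrix.mul_add,
    Matrix.mul_add, trace_add, trace_add, trace_add]
  have hMN : (Mᵀ * vecMulVec v v).trace = v ⬝ᵥ M *ᵥ v := by
    rw [mul_vecMulVec, trace_vecMulVec, mulVec_transpose, ← dotProduct_mulVec]
  have hNM : ((vecMulVec v v) * M).trace = v ⬝ᵥ M *ᵥ v := by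
    rw [← trace_transpose, transpose_mul, transpose_vecMulVec, hMN]
  have hNN : ((vecMulVec v v) * vecMulVec v v).trace = (v ⬝ᵥ v) ^ 2 := by
    rw [vecMulVec_mul_vecMulVec, trace_vecMulVec, dotProduct_smul, smul_eq_mul, sq]
  simp only [Matrix.smul_mul, Matrix.mul_smul, trace_smul, hMN, hNM, hNN, smul_eq_mul]
  ring

end Matrix

section TracePenalty

variable {m k : Type*} [Fintype m] [Fintype k]

noncomputable def tracePenalty (A : Matrix m m ℝ) (μ : ℝ) (W : Matrix k k ℝ) (X : Matrix m k ℝ) :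
    ℝ :=
  (1 / 2) * (Xᵀ * A * X).trace + (μ / 4) * ((Xᵀ * X - W)ᵀ * (Xᵀ * X - W)).trace

theorem tracePenalty_add_vecMulVec (A : Matrix m m ℝ) (μ : ℝ) (W : Matrix k k ℝ)
    {X : Matrix m k ℝ} {u : m → ℝ} {v : k → ℝ} (hXv : X *ᵥ v = 0) (hXu : Xᵀ *ᵥ u = 0) :
    tracePenalty A μ W (X + vecMulVec u v) = tracePenalty A μ W X
      + (1 / 2) * ((u ⬝ᵥ A *ᵥ u) * (v ⬝ᵥ v))
      + (μ / 4) * ((u ⬝ᵥ u) ^ 2 * (v ⬝ᵥ v) ^ 2 - 2 * (u ⬝ᵥ u) * (v ⬝ᵥ W *ᵥ v)) := by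
  have hM : v ⬝ᵥ (Xᵀ * X - W) *ᵥ v = -(v ⬝ᵥ W *ᵥ v) := by
    rw [sub_mulVec, ← mulVec_mulVec, hXv, mulVec_zero, zero_sub, dotProduct_neg]
  rw [tracePenalty, tracePenalty, trace_transpose_mul_mul_add_vecMulVec A hXv,
    transpose_mul_self_add_vecMulVec hXu, add_sub_right_comm,
    trace_transpose_mul_self_add_smul_vecMulVec, hM]
  ring

theorem exists_tracePenalty_lt {A : Matrix m m ℝ} {μ : ℝ} (hμ : 0 < μ) {W : Matrix k k ℝ}
    {X : Matrix m k ℝ} {u : m → ℝ} {v : k → ℝ} (hXv : X *ᵥ v = 0) (hXu : Xᵀ *ᵥ u = 0)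
    (hu : u ≠ 0) (hv : v ≠ 0) {ℓ ω : ℝ} (hAu : u ⬝ᵥ A *ᵥ u ≤ ℓ * (u ⬝ᵥ u))
    (hWv : ω * (v ⬝ᵥ v) ≤ v ⬝ᵥ W *ᵥ v) (hℓω : ℓ < μ * ω) :
    ∃ Y, tracePenalty A μ W Y < tracePenalty A μ W X := by
  have ha : 0 < u ⬝ᵥ u := by simpa using dotProduct_star_self_pos_iff.mpr hu
  have hb : 0 < v ⬝ᵥ v := by simpa using dotProduct_star_self_pos_iff.mpr hv
  obtain ⟨δ, hδ, hμδ⟩ : ∃ δ, 0 < δ ∧ μ * δ = μ * ω - ℓ :=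
    ⟨(μ * ω - ℓ) / μ, div_pos (by linarith) hμ, mul_div_cancel₀ _ hμ.ne'⟩
  obtain ⟨t, ht⟩ : ∃ t : ℝ, t ^ 2 * (u ⬝ᵥ u) * (v ⬝ᵥ v) = δ := by
    refine ⟨√(δ / ((u ⬝ᵥ u) * (v ⬝ᵥ v))), ?_⟩
    rw [Real.sq_sqrt (by positivity)]
    field_simp
  refine ⟨X + vecMulVec (t • u) v, ?_⟩
  rw [tracePenalty_add_vecMulVec A μ W hXv (by rw [mulVec_smul, hXu, smul_zero])]
  simp only [mulVec_smul, dotProduct_smul, smul_dotProduct, smul_eq_mul]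
  have hAu' : t ^ 2 * (v ⬝ᵥ v) * (u ⬝ᵥ A *ᵥ u) ≤ t ^ 2 * (v ⬝ᵥ v) * (ℓ * (u ⬝ᵥ u)) :=
    mul_le_mul_of_nonneg_left hAu (by positivity)
  have hWv' : t ^ 2 * (u ⬝ᵥ u) * (ω * (v ⬝ᵥ v)) ≤ t ^ 2 * (u ⬝ᵥ u) * (v ⬝ᵥ W *ᵥ v) :=
    mul_le_mul_of_nonneg_left hWv (by positivity)
  have hneg : 0 < μ * δ ^ 2 := by positivity
  linear_combination (1 / 2) * hAu' + (μ / 2) * hWv' + (1 / 4) * hneg + (δ / 2) * hμδ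
    + (μ / 4 * (t ^ 2 * (u ⬝ᵥ u) * (v ⬝ᵥ v) + δ) + ℓ / 2 - μ * ω / 2) * ht

theorem exists_tracePenalty_lt_of_rank_lt [DecidableEq m] [DecidableEq k] {V : Matrix m m ℝ}
    (hV : Vᵀ * V = 1) (lam : m → ℝ) {e : k → m} (he : Function.Injective e) {μ : ℝ} (hμ : 0 < μ)
    (w : k → ℝ) {ℓ ω : ℝ} (hlam : ∀ i, lam (e i) ≤ ℓ) (hw : ∀ i, ω ≤ w i) (hℓω : ℓ < μ * ω)
    {X : Matrix m k ℝ} (hX : X.rank < Fintype.card k) :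
    ∃ Y, tracePenalty (V * diagonal lam * Vᵀ) μ (diagonal w) Y
      < tracePenalty (V * diagonal lam * Vᵀ) μ (diagonal w) X := by
  obtain ⟨v, hv, hXv⟩ := (rank_lt_card_width_iff X).mp hX
  set B := V.submatrix id e
  have hBB : Bᵀ * B = 1 := by
    rw [← Matrix.mul_one Bᵀ, transpose_submatrix_mul_mul_submatrix, Matrix.mul_one, hV,
      submatrix_one e he]
  have hBAB : Bᵀ * (V * diagonal lam * Vᵀ) * B = diagonal (lam ∘ e) := by
    rw [transpose_submatrix_mul_mul_submatrix, ← Matrix.mul_assoc, ← Matrix.mul_assoc, hV,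
      Matrix.one_mul, Matrix.mul_assoc, hV, Matrix.mul_one, submatrix_diagonal _ e he]
  have hXB : (Xᵀ * B).rank < Fintype.card k :=
    (rank_mul_le_left _ _).trans_lt (by rwa [rank_transpose])
  obtain ⟨c, hc, hXBc⟩ := (rank_lt_card_width_iff (Xᵀ * B)).mp hXB
  have huu : (B *ᵥ c) ⬝ᵥ (B *ᵥ c) = c ⬝ᵥ c := by
    simpa [hBB] using mulVec_dotProduct_mulVec_mulVec B 1 c
  refine exists_tracePenalty_lt hμ hXv (u := B *ᵥ c) (by rwa [mulVec_mulVec]) ?_ hv ?_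
    (le_dotProduct_diagonal_mulVec hw v) hℓω
  · intro hu
    rw [hu, dotProduct_zero, eq_comm, dotProduct_self_eq_zero] at huu
    exact hc huu
  · rw [mulVec_dotProduct_mulVec_mulVec, hBAB, huu]
    exact dotProduct_diagonal_mulVec_le hlam c

end TracePenalty

theorem stmt_5_general {n p : ℕ} (hpn : p < n)
    (A : Matrix (Fin n) (Fin n) ℝ)
    (V : Matrix (Fin n) (Fin n) ℝ) (hV : Vᵀ * V = 1)
    (lam : Fin n → ℝ) (hAV : A = V * Matrix.diagonal lam * Vᵀ)
    (hmono : Monotone lam)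
    (μ : ℝ) (hμ : 0 < μ)
    (w : Fin p → ℝ) (hwanti : StrictAnti w)
    (hwlam : ∀ i : Fin p, lam (Fin.castLE hpn.le i) / μ < w i)
    (X : Matrix (Fin n) (Fin p) ℝ)
    (hmin : ∀ Y : Matrix (Fin n) (Fin p) ℝ,
      (1 / 2) * (Xᵀ * A * X).trace +
        (μ / 4) * ((Xᵀ * X - Matrix.diagonal w)ᵀ * (Xᵀ * X - Matrix.diagonal w)).trace
      ≤ (1 / 2) * (Yᵀ * A * Y).trace +
        (μ / 4) * ((Yᵀ * Y - Matrix.diagonal w)ᵀ * (Yᵀ * Y - Matrix.diagonal w)).trace) :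
    X.rank = p ∧ ∀ i : Fin p, (fun k => X k i) ≠ 0 := by
  have hrank : ¬ X.rank < p := by
    intro hX
    let last : Fin p := ⟨p - 1, by omega⟩
    have hlast : ∀ i, i ≤ last := fun i => Fin.le_def.mpr (Nat.le_sub_one_of_lt i.isLt)
    obtain ⟨Y, hY⟩ := exists_tracePenalty_lt_of_rank_lt hV lam (Fin.castLE_injective hpn.le) hμ w
      (fun i => hmono (hlast i)) (fun i => hwanti.antitone (hlast i))
      ((div_lt_iff₀' hμ).mp (hwlam last)) (by simpa using hX)
    subst hAV
    exact (hY.trans_le (hmin Y)).false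
  refine ⟨le_antisymm (by simpa using X.rank_le_card_width) (not_lt.mp hrank), fun i hi => ?_⟩
  apply hrank
  simpa using (rank_lt_card_width_iff X).mpr ⟨Pi.single i 1, by simp, by rwa [mulVec_single_one]⟩

/-- Every global minimizer of the weighted trace-penalty objective has full column rank `p`. -/
theorem stmt_5 {n p : ℕ} (hpn : p < n)
    (A : Matrix (Fin n) (Fin n) ℝ) (hA : A.IsSymm)
    (V : Matrix (Fin n) (Fin n) ℝ) (hV : Vᵀ * V = 1)
    (lam : Fin n → ℝ) (hAV : A = V * Matrix.diagonal lam * Vᵀ)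
    (hmono : Monotone lam)
    (hstrict : ∀ i j : Fin n, i < j → (j : ℕ) ≤ p → lam i < lam j)
    (μ : ℝ) (hμ : 0 < μ)
    (w : Fin p → ℝ) (hwanti : StrictAnti w)
    (hwlam : ∀ i : Fin p, lam (Fin.castLE hpn.le i) / μ < w i)
    (X : Matrix (Fin n) (Fin p) ℝ)
    (hmin : ∀ Y : Matrix (Fin n) (Fin p) ℝ,
      (1 / 2) * (Xᵀ * A * X).trace +
        (μ / 4) * ((Xᵀ * X - Matrix.diagonal w)ᵀ * (Xᵀ * X - Matrix.diagonal w)).trace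
      ≤ (1 / 2) * (Yᵀ * A * Y).trace +
        (μ / 4) * ((Yᵀ * Y - Matrix.diagonal w)ᵀ * (Yᵀ * Y - Matrix.diagonal w)).trace) :
    X.rank = p ∧ ∀ i : Fin p, (fun k => X k i) ≠ 0 :=
  stmt_5_general hpn A V hV lam hAV hmono μ hμ w hwanti hwlam X hmin
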